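/- Let u : ℝ × ℝ² → ℝ be a smooth solution of the two-dimensional heat equation u_t = u_{xx} + u_{yy} and let φ : ℝ × ℝ² → ℝ satisfy the adjoint equation φ_t + φ_{xx} + φ_{yy} = 0. Set W = -y u_x + x u_y, C^t = W φ, C^x = W φ_x - φ(u_y - y u_{xx} + x u_{xy}), C^y = W φ_y - φ(x u_{yy} - u_x - y u_{xy}). Then D_t C^t + D_x C^x + D_y C^y = 0. -/

import Mathlib

/-- Partial derivative in t. -/
noncomputable def Dt (f : ℝ × ℝ × ℝ → ℝ) : ℝ × ℝ × ℝ → ℝ :=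
  fun p => deriv (fun s => f (s, p.2.1, p.2.2)) p.1

/-- Partial derivative in x. -/
noncomputable def Dx (f : ℝ × ℝ × ℝ → ℝ) : ℝ × ℝ × ℝ → ℝ :=
  fun p => deriv (fun a => f (p.1, a, p.2.2)) p.2.1

/-- Partial derivative in y. -/
noncomputable def Dy (f : ℝ × ℝ × ℝ → ℝ) : ℝ × ℝ × ℝ → ℝ :=
  fun p => deriv (fun b => f (p.1, p.2.1, b)) p.2.2

section
variable {f : ℝ × ℝ × ℝ → ℝ} (hf : ContDiff ℝ (⊤ : ℕ∞) f)

lemma lineT (t x y : ℝ) : HasDerivAt (fun s : ℝ => (s, x, y)) ((1:ℝ),(0:ℝ),(0:ℝ)) t :=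
  (hasDerivAt_id t).prodMk ((hasDerivAt_const t x).prodMk (hasDerivAt_const t y))
lemma lineX (t x y : ℝ) : HasDerivAt (fun a : ℝ => (t, a, y)) ((0:ℝ),(1:ℝ),(0:ℝ)) x :=
  (hasDerivAt_const x t).prodMk ((hasDerivAt_id x).prodMk (hasDerivAt_const x y))
lemma lineY (t x y : ℝ) : HasDerivAt (fun b : ℝ => (t, x, b)) ((0:ℝ),(0:ℝ),(1:ℝ)) y :=
  (hasDerivAt_const y t).prodMk ((hasDerivAt_const y x).prodMk (hasDerivAt_id y))

include hf

lemma hDt (t x y : ℝ) :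
    HasDerivAt (fun s => f (s, x, y)) (Dt f (t, x, y)) t := by
  have h := ((hf.differentiable (by simp) (t,x,y)).hasFDerivAt).comp_hasDerivAt t (lineT t x y)
  have := h.differentiableAt.hasDerivAt
  exact this

lemma hDx (t x y : ℝ) :
    HasDerivAt (fun a => f (t, a, y)) (Dx f (t, x, y)) x := by
  have h := ((hf.differentiable (by simp) (t,x,y)).hasFDerivAt).comp_hasDerivAt x (lineX t x y)
  exact h.differentiableAt.hasDerivAt

lemma hDy (t x y : ℝ) :
    HasDerivAt (fun b => f (t, x, b)) (Dy f (t, x, y)) y := by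
  have h := ((hf.differentiable (by simp) (t,x,y)).hasFDerivAt).comp_hasDerivAt y (lineY t x y)
  exact h.differentiableAt.hasDerivAt

lemma Dt_eq_fderiv (p : ℝ × ℝ × ℝ) : Dt f p = fderiv ℝ f p (1,0,0) :=
  (((hf.differentiable (by simp) p).hasFDerivAt).comp_hasDerivAt p.1 (lineT p.1 p.2.1 p.2.2)).deriv
lemma Dx_eq_fderiv (p : ℝ × ℝ × ℝ) : Dx f p = fderiv ℝ f p (0,1,0) :=
  (((hf.differentiable (by simp) p).hasFDerivAt).comp_hasDerivAt p.2.1 (lineX p.1 p.2.1 p.2.2)).deriv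
lemma Dy_eq_fderiv (p : ℝ × ℝ × ℝ) : Dy f p = fderiv ℝ f p (0,0,1) :=
  (((hf.differentiable (by simp) p).hasFDerivAt).comp_hasDerivAt p.2.2 (lineY p.1 p.2.1 p.2.2)).deriv

lemma contDiff_fderiv_apply (v : ℝ × ℝ × ℝ) : ContDiff ℝ (⊤ : ℕ∞) (fun p => fderiv ℝ f p v) :=
  (hf.fderiv_right (le_refl _)).clm_apply contDiff_const

lemma contDiff_Dt : ContDiff ℝ (⊤ : ℕ∞) (Dt f) := by
  have : Dt f = fun p => fderiv ℝ f p (1,0,0) := funext fun p => Dt_eq_fderiv hf p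
  rw [this]; exact contDiff_fderiv_apply hf _
lemma contDiff_Dx : ContDiff ℝ (⊤ : ℕ∞) (Dx f) := by
  have : Dx f = fun p => fderiv ℝ f p (0,1,0) := funext fun p => Dx_eq_fderiv hf p
  rw [this]; exact contDiff_fderiv_apply hf _
lemma contDiff_Dy : ContDiff ℝ (⊤ : ℕ∞) (Dy f) := by
  have : Dy f = fun p => fderiv ℝ f p (0,0,1) := funext fun p => Dy_eq_fderiv hf p
  rw [this]; exact contDiff_fderiv_apply hf _

lemma swap_fderiv (v w : ℝ × ℝ × ℝ) (p : ℝ × ℝ × ℝ) :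
    fderiv ℝ (fun q => fderiv ℝ f q w) p v = fderiv ℝ (fun q => fderiv ℝ f q v) p w := by
  have hsymm : IsSymmSndFDerivAt ℝ f p := hf.contDiffAt.isSymmSndFDerivAt (by simp [minSmoothness_of_isRCLikeNormedField]; exact WithTop.coe_le_coe.mpr (le_top : (2 : ℕ∞) ≤ ⊤))
  have hd : DifferentiableAt ℝ (fderiv ℝ f) p :=
    ((hf.fderiv_right (m := (⊤ : ℕ∞)) (by simp)).differentiable (by simp)) p
  have key : ∀ (z v' : ℝ × ℝ × ℝ), fderiv ℝ (fun q => fderiv ℝ f q z) p v'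
      = fderiv ℝ (fderiv ℝ f) p v' z := by
    intro z v'
    rw [fderiv_clm_apply hd (differentiableAt_const z)]
    simp
  rw [key, key, hsymm]
end

section swaps
variable {f : ℝ × ℝ × ℝ → ℝ} (hf : ContDiff ℝ (⊤ : ℕ∞) f)
include hf

lemma swap_xy (p : ℝ × ℝ × ℝ) : Dy (Dx f) p = Dx (Dy f) p := by
  have e1 : Dx f = fun q => fderiv ℝ f q (0,1,0) := funext (Dx_eq_fderiv hf)
  have e2 : Dy f = fun q => fderiv ℝ f q (0,0,1) := funext (Dy_eq_fderiv hf)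
  rw [Dy_eq_fderiv (contDiff_Dx hf), Dx_eq_fderiv (contDiff_Dy hf), e1, e2, swap_fderiv hf]

lemma swap_tx (p : ℝ × ℝ × ℝ) : Dt (Dx f) p = Dx (Dt f) p := by
  have e1 : Dx f = fun q => fderiv ℝ f q (0,1,0) := funext (Dx_eq_fderiv hf)
  have e2 : Dt f = fun q => fderiv ℝ f q (1,0,0) := funext (Dt_eq_fderiv hf)
  rw [Dt_eq_fderiv (contDiff_Dx hf), Dx_eq_fderiv (contDiff_Dt hf), e1, e2, swap_fderiv hf]

lemma swap_ty (p : ℝ × ℝ × ℝ) : Dt (Dy f) p = Dy (Dt f) p := by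
  have e1 : Dy f = fun q => fderiv ℝ f q (0,0,1) := funext (Dy_eq_fderiv hf)
  have e2 : Dt f = fun q => fderiv ℝ f q (1,0,0) := funext (Dt_eq_fderiv hf)
  rw [Dt_eq_fderiv (contDiff_Dy hf), Dy_eq_fderiv (contDiff_Dt hf), e1, e2, swap_fderiv hf]
end swaps

theorem conservation_law_rotation_2d (u φ : ℝ × ℝ × ℝ → ℝ)
    (hu : ContDiff ℝ (⊤ : ℕ∞) u) (hφ : ContDiff ℝ (⊤ : ℕ∞) φ)
    (heat : ∀ p, Dt u p = Dx (Dx u) p + Dy (Dy u) p)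
    (adjoint : ∀ p, Dt φ p + Dx (Dx φ) p + Dy (Dy φ) p = 0) :
    ∀ p : ℝ × ℝ × ℝ,
      Dt (fun q => (-q.2.2 * Dx u q + q.2.1 * Dy u q) * φ q) p +
        Dx (fun q => (-q.2.2 * Dx u q + q.2.1 * Dy u q) * Dx φ q -
          φ q * (Dy u q - q.2.2 * Dx (Dx u) q + q.2.1 * Dx (Dy u) q)) p +
        Dy (fun q => (-q.2.2 * Dx u q + q.2.1 * Dy u q) * Dy φ q -
          φ q * (q.2.1 * Dy (Dy u) q - Dx u q - q.2.2 * Dx (Dy u) q)) p = 0 := by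
  rintro ⟨t, x, y⟩
  have hux := contDiff_Dx hu
  have huy := contDiff_Dy hu
  have huxx := contDiff_Dx hux
  have huxy := contDiff_Dx huy
  have huyy := contDiff_Dy huy
  have hφx := contDiff_Dx hφ
  -- differentiated heat equations
  have heatx : Dx (Dt u) (t,x,y) = Dx (Dx (Dx u)) (t,x,y) + Dx (Dy (Dy u)) (t,x,y) := by
    have h1 := hDx huxx t x y
    have h2 := hDx huyy t x y
    have e : Dx (Dt u) (t,x,y) = deriv (fun a => Dt u (t,a,y)) x := rfl
    rw [e]
    simp only [heat]
    exact (h1.add h2).deriv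
  have heaty : Dy (Dt u) (t,x,y) = Dy (Dx (Dx u)) (t,x,y) + Dy (Dy (Dy u)) (t,x,y) := by
    have h1 := hDy huxx t x y
    have h2 := hDy huyy t x y
    have e : Dy (Dt u) (t,x,y) = deriv (fun b => Dt u (t,x,b)) y := rfl
    rw [e]
    simp only [heat]
    exact (h1.add h2).deriv
  have fsw : Dy (Dx u) = Dx (Dy u) := funext (swap_xy hu)
  have e1 : Dt (Dx u) (t,x,y) = Dx (Dx (Dx u)) (t,x,y) + Dx (Dy (Dy u)) (t,x,y) :=
    (swap_tx hu (t,x,y)).trans heatx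
  have e2 : Dt (Dy u) (t,x,y) = Dx (Dx (Dy u)) (t,x,y) + Dy (Dy (Dy u)) (t,x,y) := by
    rw [swap_ty hu, heaty, swap_xy hux, fsw]
  have s1 : Dy (Dx u) (t,x,y) = Dx (Dy u) (t,x,y) := swap_xy hu (t,x,y)
  have s2 : Dy (Dx (Dy u)) (t,x,y) = Dx (Dy (Dy u)) (t,x,y) := swap_xy huy (t,x,y)
  have aP : Dt φ (t,x,y) = -(Dx (Dx φ) (t,x,y) + Dy (Dy φ) (t,x,y)) := by
    have := adjoint (t,x,y); linarith
  -- the three outer derivatives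
  have h1 : Dt (fun q => (-q.2.2 * Dx u q + q.2.1 * Dy u q) * φ q) (t,x,y) =
      (-y * Dt (Dx u) (t,x,y) + x * Dt (Dy u) (t,x,y)) * φ (t,x,y) +
        (-y * Dx u (t,x,y) + x * Dy u (t,x,y)) * Dt φ (t,x,y) :=
    ((((hDt hux t x y).const_mul (-y)).add ((hDt huy t x y).const_mul x)).mul
      (hDt hφ t x y)).deriv
  have h2 : Dx (fun q => (-q.2.2 * Dx u q + q.2.1 * Dy u q) * Dx φ q -
      φ q * (Dy u q - q.2.2 * Dx (Dx u) q + q.2.1 * Dx (Dy u) q)) (t,x,y) =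
      ((-y * Dx (Dx u) (t,x,y) + (1 * Dy u (t,x,y) + x * Dx (Dy u) (t,x,y))) * Dx φ (t,x,y) +
        (-y * Dx u (t,x,y) + x * Dy u (t,x,y)) * Dx (Dx φ) (t,x,y)) -
      (Dx φ (t,x,y) * (Dy u (t,x,y) - y * Dx (Dx u) (t,x,y) + x * Dx (Dy u) (t,x,y)) +
        φ (t,x,y) * ((Dx (Dy u) (t,x,y) - y * Dx (Dx (Dx u)) (t,x,y)) +
          (1 * Dx (Dy u) (t,x,y) + x * Dx (Dx (Dy u)) (t,x,y)))) := by
    have hA := ((hDx hux t x y).const_mul (-y)).add ((hasDerivAt_id x).mul (hDx huy t x y))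
    have hB := hDx (contDiff_Dx hφ) t x y
    have hC := hDx hφ t x y
    have hD := ((hDx huy t x y).sub ((hDx huxx t x y).const_mul y)).add
      ((hasDerivAt_id x).mul (hDx huxy t x y))
    exact ((hA.mul hB).sub (hC.mul hD)).deriv
  have h3 : Dy (fun q => (-q.2.2 * Dx u q + q.2.1 * Dy u q) * Dy φ q -
      φ q * (q.2.1 * Dy (Dy u) q - Dx u q - q.2.2 * Dx (Dy u) q)) (t,x,y) =
      (((-1 * Dx u (t,x,y) + -y * Dy (Dx u) (t,x,y)) + x * Dy (Dy u) (t,x,y)) * Dy φ (t,x,y) +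
        (-y * Dx u (t,x,y) + x * Dy u (t,x,y)) * Dy (Dy φ) (t,x,y)) -
      (Dy φ (t,x,y) * (x * Dy (Dy u) (t,x,y) - Dx u (t,x,y) - y * Dx (Dy u) (t,x,y)) +
        φ (t,x,y) * ((x * Dy (Dy (Dy u)) (t,x,y) - Dy (Dx u) (t,x,y)) -
          (1 * Dx (Dy u) (t,x,y) + y * Dy (Dx (Dy u)) (t,x,y)))) := by
    have hA := (((hasDerivAt_id y).neg.mul (hDy hux t x y)).add ((hDy huy t x y).const_mul x))
    have hB := hDy (contDiff_Dy hφ) t x y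
    have hC := hDy hφ t x y
    have hD := (((hDy huyy t x y).const_mul x).sub (hDy hux t x y)).sub
      ((hasDerivAt_id y).mul (hDy huxy t x y))
    exact ((hA.mul hB).sub (hC.mul hD)).deriv
  rw [h1, h2, h3, s1, s2, e1, e2, aP]
  ring
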